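/- arXiv:2301.07092 — 4 statements merged into one kernel-verified Lean document; each statement's English description precedes it below -/
import Mathlib

section
/- Let D ⊆ R^3 be open, v ∈ C^2(D; C^3), and α ∈ C^1(D; SPD(3)). Then pointwise in D: 2Re{(∇×v)·(α v̄ × x)} = ∇·[2Re{(v·x)α v̄} − (α v·v̄)x] − 2Re{(v·x)∇·[α v̄]} + (α + (x·∇)α)v·v̄. -/
open scoped BigOperators
open Complex

noncomputable section

abbrev V3 := Fin 3 → ℂ

/-- Coerce a real vector to a complex vector. -/
def toC (x : Fin 3 → ℝ) : V3 := fun i => (x i : ℂ)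

/-- Bilinear (unconjugated) dot product on `ℂ³`. -/
def dotc (a b : V3) : ℂ := ∑ i, a i * b i

/-- Componentwise complex conjugation. -/
def cjv (v : V3) : V3 := fun i => (starRingEnd ℂ) (v i)

/-- Apply a real 3×3 matrix to a complex vector. -/
def mapp (M : Fin 3 → Fin 3 → ℝ) (v : V3) : V3 := fun i => ∑ j, (M i j : ℂ) * v j

/-- Sesquilinear form `M v · w̄ = ∑ᵢⱼ Mᵢⱼ vⱼ w̄ᵢ`. -/
def qf (M : Fin 3 → Fin 3 → ℝ) (v w : V3) : ℂ := ∑ i, mapp M v i * (starRingEnd ℂ) (w i)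

/-- Squared Euclidean norm `|v|²` of a complex vector. -/
def n2 (v : V3) : ℝ := ∑ i, Complex.normSq (v i)

/-- Symmetry of a real 3×3 matrix. -/
def IsSymm3 (M : Fin 3 → Fin 3 → ℝ) : Prop := ∀ i j, M i j = M j i

/-- Positive definiteness of a real 3×3 matrix, as a quadratic form on `ℂ³`. -/
def IsPos3 (M : Fin 3 → Fin 3 → ℝ) : Prop := ∀ v : V3, v ≠ 0 → 0 < (qf M v v).re

/-- Partial derivative `∂ᵢF` of a vector field. -/
def pdv (F : (Fin 3 → ℝ) → V3) (i : Fin 3) (x : Fin 3 → ℝ) : V3 :=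
  fderiv ℝ F x (Pi.single i 1)

/-- Divergence `∇·F` of a complex vector field. -/
def divg (F : (Fin 3 → ℝ) → V3) (x : Fin 3 → ℝ) : ℂ := ∑ i, pdv F i x i

/-- Curl `∇×F` of a complex vector field. -/
def curl3 (F : (Fin 3 → ℝ) → V3) (x : Fin 3 → ℝ) : V3 :=
  fun i => pdv F (i + 1) x (i + 2) - pdv F (i + 2) x (i + 1)

/-- Gradient of a real scalar field. -/
def gradR (β : (Fin 3 → ℝ) → ℝ) (x : Fin 3 → ℝ) : Fin 3 → ℝ :=
  fun i => fderiv ℝ β x (Pi.single i 1)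

/-! Write `w = α v̄`, `c = v·x` and `q = α v·v̄`. The product rule gives
`∇·[2Re(c w) − q x] = 2Re(∇c·w + c ∇·w) − (x·∇q + 3q)`: the terms `c ∇·w` cancel, and the term
`((x·∇)α) v·v̄` of `x·∇q` cancels the one on the right. Since `∇c = (∇v) x + v` and `α(x)` is
symmetric, what is left is `2Re` of the pointwise identity
`(∇×v)·(w×x) = ((∇v) x)·w − ((x·∇)v)·w`, together with `2Re(v·w) = 2q`. -/

open ComplexConjugate

section Calculus

variable {E : Type*} [NormedAddCommGroup E] [NormedSpace ℝ E] {x : E}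

theorem ContinuousLinearMap.apply_eq_sum_single {ι M : Type*} [Fintype ι] [DecidableEq ι]
    [AddCommGroup M] [Module ℝ M] [TopologicalSpace M] (g : (ι → ℝ) →L[ℝ] M) (u : ι → ℝ) :
    g u = ∑ i, u i • g (Pi.single i 1) := by
  conv_lhs => rw [← (Pi.basisFun ℝ ι).sum_repr u]
  simp

theorem fderiv_apply_apply {ι F : Type*} [Fintype ι] [NormedAddCommGroup F] [NormedSpace ℝ F]
    {G : E → ι → F} (hG : DifferentiableAt ℝ G x) (j : ι) (u : E) :
    fderiv ℝ (fun y => G y j) x u = fderiv ℝ G x u j := by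
  rw [fderiv_apply hG]; rfl

theorem fderiv_ofReal_apply {f : E → ℝ} (hf : DifferentiableAt ℝ f x) (u : E) :
    fderiv ℝ (fun y => (f y : ℂ)) x u = fderiv ℝ f x u := by
  have h : HasFDerivAt (fun y => (f y : ℂ)) (Complex.ofRealCLM.comp (fderiv ℝ f x)) x :=
    Complex.ofRealCLM.hasFDerivAt.comp x hf.hasFDerivAt
  rw [h.fderiv]; rfl

theorem fderiv_cjv_apply (F : E → V3) (x u : E) :
    fderiv ℝ (fun y => cjv (F y)) x u = cjv (fderiv ℝ F x u) := by
  have h : (fun y => cjv (F y))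
      = ContinuousLinearEquiv.piCongrRight (fun _ : Fin 3 => Complex.conjCLE) ∘ F := rfl
  rw [h, ContinuousLinearEquiv.comp_fderiv]; rfl

theorem fderiv_qf {α : E → Fin 3 → Fin 3 → ℝ} {v w : E → V3} (hα : DifferentiableAt ℝ α x)
    (hv : DifferentiableAt ℝ v x) (hw : DifferentiableAt ℝ w x) (u : E) :
    fderiv ℝ (fun y => qf (α y) (v y) (w y)) x u
      = qf (fderiv ℝ α x u) (v x) (w x) + qf (α x) (fderiv ℝ v x u) (w x)
        + qf (α x) (v x) (fderiv ℝ w x u) := by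
  have hcw : DifferentiableAt ℝ (fun y => cjv (w y)) x := by unfold cjv; fun_prop
  have hαi : ∀ i, DifferentiableAt ℝ (fun y => α y i) x := fun i => by fun_prop
  have hαij : ∀ i j, DifferentiableAt ℝ (fun y => α y i j) x := fun i j => by fun_prop
  have h : (fun y => qf (α y) (v y) (w y))
      = fun y => ∑ i, ∑ j, (α y i j : ℂ) * v y j * cjv (w y) i := by
    funext y; simp [qf, mapp, cjv, Finset.sum_mul]
  rw [h]
  simp (disch := fun_prop) only [fderiv_fun_sum, fderiv_fun_mul, sum_apply, add_apply,
    smul_apply, smul_eq_mul]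
  simp only [fderiv_apply_apply hcw, fderiv_cjv_apply, fderiv_apply_apply hv,
    fderiv_ofReal_apply (hαij _ _), fderiv_apply_apply (hαi _), fderiv_apply_apply hα]
  simp only [qf, mapp, cjv, Fin.sum_univ_three]
  ring

end Calculus

section VectorCalculus

variable {F : (Fin 3 → ℝ) → V3} {x : Fin 3 → ℝ}

theorem hasFDerivAt_toC (x : Fin 3 → ℝ) :
    HasFDerivAt toC
      (ContinuousLinearMap.pi fun i => Complex.ofRealCLM.comp (ContinuousLinearMap.proj i)) x :=
  (ContinuousLinearMap.pi fun i => Complex.ofRealCLM.comp (ContinuousLinearMap.proj i)).hasFDerivAt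

theorem fderiv_toC_apply (x u : Fin 3 → ℝ) : fderiv ℝ toC x u = toC u := by
  rw [(hasFDerivAt_toC x).fderiv]; rfl

theorem dotc_toC_single (a : V3) (i : Fin 3) : dotc a (toC (Pi.single i 1)) = a i := by
  simp [dotc, toC, Pi.single_apply, apply_ite ((↑) : ℝ → ℂ)]

theorem fderiv_dotc_toC {v : (Fin 3 → ℝ) → V3} (hv : DifferentiableAt ℝ v x) (u : Fin 3 → ℝ) :
    fderiv ℝ (fun y => dotc (v y) (toC y)) x u
      = dotc (fderiv ℝ v x u) (toC x) + dotc (v x) (toC u) := by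
  have ht : DifferentiableAt ℝ toC x := (hasFDerivAt_toC x).differentiableAt
  have hvj : ∀ j, DifferentiableAt ℝ (fun y => v y j) x := fun j => by fun_prop
  have htj : ∀ j, DifferentiableAt ℝ (fun y => toC y j) x := fun j => by fun_prop
  unfold dotc
  rw [fderiv_fun_sum (fun j _ => (hvj j).fun_mul (htj j))]
  simp only [fderiv_fun_mul (hvj _) (htj _), Finset.sum_add_distrib, add_apply, sum_apply,
    smul_apply, smul_eq_mul, fderiv_apply_apply hv, fderiv_apply_apply ht, fderiv_toC_apply]
  rw [add_comm]; simp only [mul_comm (toC x _)]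

theorem sum_fderiv_dotc_toC_mul {v : (Fin 3 → ℝ) → V3} (hv : DifferentiableAt ℝ v x) (a : V3) :
    ∑ i, fderiv ℝ (fun y => dotc (v y) (toC y)) x (Pi.single i 1) * a i
      = ∑ i, dotc (pdv v i x) (toC x) * a i + dotc (v x) a := by
  simp only [fderiv_dotc_toC hv, dotc_toC_single, add_mul, Finset.sum_add_distrib]
  rfl

theorem divg_add {G : (Fin 3 → ℝ) → V3} (hF : DifferentiableAt ℝ F x)
    (hG : DifferentiableAt ℝ G x) : divg (fun y => F y + G y) x = divg F x + divg G x := by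
  simp [divg, pdv, fderiv_fun_add hF hG, Finset.sum_add_distrib]

theorem divg_sub {G : (Fin 3 → ℝ) → V3} (hF : DifferentiableAt ℝ F x)
    (hG : DifferentiableAt ℝ G x) : divg (fun y => F y - G y) x = divg F x - divg G x := by
  simp [divg, pdv, fderiv_fun_sub hF hG, Finset.sum_sub_distrib]

theorem divg_smul {f : (Fin 3 → ℝ) → ℂ} (hf : DifferentiableAt ℝ f x)
    (hF : DifferentiableAt ℝ F x) :
    divg (fun y => f y • F y) x = ∑ i, fderiv ℝ f x (Pi.single i 1) * F x i + f x * divg F x := by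
  simp [divg, pdv, fderiv_fun_smul hf hF, Finset.sum_add_distrib, Finset.mul_sum, add_comm]

theorem divg_cjv (F : (Fin 3 → ℝ) → V3) (x : Fin 3 → ℝ) :
    divg (fun y => cjv (F y)) x = conj (divg F x) := by
  simp [divg, pdv, fderiv_cjv_apply, cjv]

theorem divg_toC : divg toC x = 3 := by
  simp [divg, pdv, fderiv_toC_apply, toC]

theorem divg_smul_toC {f : (Fin 3 → ℝ) → ℂ} (hf : DifferentiableAt ℝ f x) :
    divg (fun y => f y • toC y) x = fderiv ℝ f x x + 3 * f x := by
  rw [divg_smul hf (hasFDerivAt_toC x).differentiableAt, divg_toC,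
    (fderiv ℝ f x).apply_eq_sum_single x]
  simp [toC, mul_comm]

theorem divg_ofReal_two_mul_re (hF : DifferentiableAt ℝ F x) :
    divg (fun y i => ((2 * (F y i).re : ℝ) : ℂ)) x = ((2 * (divg F x).re : ℝ) : ℂ) := by
  have h : (fun y i => ((2 * (F y i).re : ℝ) : ℂ)) = fun y => F y + cjv (F y) := by
    funext y i; exact (Complex.add_conj _).symm
  have hc : DifferentiableAt ℝ (fun y => cjv (F y)) x := by unfold cjv; fun_prop
  rw [h, divg_add hF hc, divg_cjv, Complex.add_conj]

theorem divg_two_re_mul_sub_mul_coord {c q : (Fin 3 → ℝ) → ℂ} {W : (Fin 3 → ℝ) → V3}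
    (hc : DifferentiableAt ℝ c x) (hW : DifferentiableAt ℝ W x) (hq : DifferentiableAt ℝ q x) :
    divg (fun y i => ((2 * (c y * W y i).re : ℝ) : ℂ) - q y * (y i : ℂ)) x
      = ((2 * (∑ i, fderiv ℝ c x (Pi.single i 1) * W x i + c x * divg W x).re : ℝ) : ℂ)
        - (fderiv ℝ q x x + 3 * q x) := by
  have hcW : DifferentiableAt ℝ (fun y => c y • W y) x := hc.smul hW
  have hre : DifferentiableAt ℝ (fun y i => ((2 * ((c y • W y) i).re : ℝ) : ℂ)) x := by
    fun_prop
  rw [← divg_smul hc hW, ← divg_smul_toC hq, ← divg_ofReal_two_mul_re hcW]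
  exact divg_sub hre (hq.smul (hasFDerivAt_toC x).differentiableAt)

theorem dotc_curl3_cross_toC (v : (Fin 3 → ℝ) → V3) (x : Fin 3 → ℝ) (a : V3) :
    dotc (curl3 v x) (crossProduct a (toC x))
      = ∑ i, dotc (pdv v i x) (toC x) * a i - dotc (fderiv ℝ v x x) a := by
  rw [(fderiv ℝ v x).apply_eq_sum_single x]
  simp only [dotc, curl3, pdv, cross_apply, toC, Fin.sum_univ_three, Finset.sum_apply,
    Pi.smul_apply, Complex.real_smul, Fin.reduceAdd, Matrix.cons_val_zero, Matrix.cons_val_one,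
    Matrix.cons_val]
  ring

end VectorCalculus

theorem qf_add_left (M N : Fin 3 → Fin 3 → ℝ) (u w : V3) :
    qf (fun i j => M i j + N i j) u w = qf M u w + qf N u w := by
  simp [qf, mapp, add_mul, Finset.sum_add_distrib]

theorem qf_eq_dotc {M : Fin 3 → Fin 3 → ℝ} (hM : IsSymm3 M) (u w : V3) :
    qf M u w = dotc u (mapp M (cjv w)) := by
  simp only [qf, dotc, mapp, cjv, Fin.sum_univ_three, hM 1 0, hM 2 0, hM 2 1]
  ring

theorem qf_swap_eq_conj_dotc (M : Fin 3 → Fin 3 → ℝ) (u w : V3) :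
    qf M w u = conj (dotc u (mapp M (cjv w))) := by
  simp only [qf, dotc, mapp, cjv, Fin.sum_univ_three, map_add, map_mul, Complex.conj_ofReal,
    Complex.conj_conj]
  ring

theorem stmt2_general (D : Set (Fin 3 → ℝ)) (hD : IsOpen D)
    (v : (Fin 3 → ℝ) → V3) (hv : ContDiffOn ℝ 2 v D)
    (α : (Fin 3 → ℝ) → Fin 3 → Fin 3 → ℝ) (hα : ContDiffOn ℝ 1 α D)
    (hsym : ∀ x ∈ D, IsSymm3 (α x)) :
    ∀ x ∈ D,
      ((2 * (dotc (curl3 v x) (crossProduct (mapp (α x) (cjv (v x))) (toC x))).re : ℝ) : ℂ)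
      = divg (fun y i =>
            ((2 * (dotc (v y) (toC y) * mapp (α y) (cjv (v y)) i).re : ℝ) : ℂ)
              - qf (α y) (v y) (v y) * (y i : ℂ)) x
        - ((2 * (dotc (v x) (toC x) * divg (fun y => mapp (α y) (cjv (v y))) x).re : ℝ) : ℂ)
        + qf (fun i j => α x i j + fderiv ℝ α x x i j) (v x) (v x) := by
  intro x hx
  have hvx : DifferentiableAt ℝ v x :=
    (hv.contDiffAt (hD.mem_nhds hx)).differentiableAt (by norm_num)
  have hαx : DifferentiableAt ℝ α x :=
    (hα.contDiffAt (hD.mem_nhds hx)).differentiableAt one_ne_zero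
  rw [divg_two_re_mul_sub_mul_coord (by unfold dotc toC; fun_prop) (by unfold mapp cjv; fun_prop)
      (by unfold qf mapp; fun_prop),
    fderiv_qf hαx hvx hvx, qf_add_left, dotc_curl3_cross_toC, sum_fderiv_dotc_toC_mul hvx]
  have hUV := qf_eq_dotc (hsym x hx) (fderiv ℝ v x x) (v x)
  have hVU := qf_swap_eq_conj_dotc (α x) (fderiv ℝ v x x) (v x)
  have hVV := qf_eq_dotc (hsym x hx) (v x) (v x)
  have hVV' := qf_swap_eq_conj_dotc (α x) (v x) (v x)
  simp only [← Complex.add_conj, map_add, map_sub]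
  linear_combination hUV + hVU + hVV + hVV'

/-- the pointwise Rellich-multiplier identity
`2Re{(∇×v)·(αv̄×x)} = ∇·[2Re{(v·x)αv̄} − (αv·v̄)x] − 2Re{(v·x)∇·[αv̄]} + (α+(x·∇)α)v·v̄`. -/
theorem stmt2 (D : Set (Fin 3 → ℝ)) (hD : IsOpen D)
    (v : (Fin 3 → ℝ) → V3) (hv : ContDiffOn ℝ 2 v D)
    (α : (Fin 3 → ℝ) → Fin 3 → Fin 3 → ℝ) (hα : ContDiffOn ℝ 1 α D)
    (hsym : ∀ x ∈ D, IsSymm3 (α x)) (hpos : ∀ x ∈ D, IsPos3 (α x)) :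
    ∀ x ∈ D,
      ((2 * (dotc (curl3 v x) (crossProduct (mapp (α x) (cjv (v x))) (toC x))).re : ℝ) : ℂ)
      = divg (fun y i =>
            ((2 * (dotc (v y) (toC y) * mapp (α y) (cjv (v y)) i).re : ℝ) : ℂ)
              - qf (α y) (v y) (v y) * (y i : ℂ)) x
        - ((2 * (dotc (v x) (toC x) * divg (fun y => mapp (α y) (cjv (v y))) x).re : ℝ) : ℂ)
        + qf (fun i j => α x i j + fderiv ℝ α x x i j) (v x) (v x) :=
  stmt2_general D hD v hv α hα hsym
end
end

section
/- Let D ⊆ R^3 be open, E, H ∈ C^2(D; C^3), ε, μ ∈ C^1(D; Sym(3,R)), and β ∈ C^1(D; R). Then the following Morawetz-type identity holds pointwise in D: 2Re{(∇×E − iωμH)·(ε Ē × x + β H̄) + (∇×H + iωεE)·(μ H̄ × x − β Ē)} = ∇·[2Re{(E·x)ε Ē + (H·x)μ H̄ + β E × H̄} − (εE·Ē)x − (μH·H̄)x] − 2Re{(E·x)∇·[εĒ] + (H·x)∇·[μH̄] + ∇β·(E×H̄)} + (ε + (x·∇)ε)E·Ē + (μ + (x·∇)μ)H·H̄. -/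
open scoped BigOperators
open Complex

noncomputable section

/-!
Everything is first order at the point `x`, so the identity is an algebraic one between the
values of the fields and their partial derivatives there. The `ω`-terms of the left-hand side are
purely imaginary because `ε x` and `μ x` are real symmetric. What remains splits into two copies
of the identity for a single field `E` with coefficient `ε` (and `H` with `μ`), which comes from
`x × (∇ × E) = ∇(E·x) - (x·∇)E - E`, and the product rule for `∇·(β E × H̄)`.
-/
section Partials

variable {n : ℕ}
  {W W' W'' : Type*} [NormedAddCommGroup W] [NormedSpace ℝ W]
  [NormedAddCommGroup W'] [NormedSpace ℝ W'] [NormedAddCommGroup W''] [NormedSpace ℝ W'']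

def HasPartials (f : (Fin n → ℝ) → W) (x : Fin n → ℝ) (d : Fin n → W) : Prop :=
  ∃ L : (Fin n → ℝ) →L[ℝ] W, HasFDerivAt f L x ∧ ∀ k, L (Pi.single k 1) = d k

namespace HasPartials

variable {f g : (Fin n → ℝ) → W} {x : Fin n → ℝ} {d d' e : Fin n → W}

theorem of_differentiableAt (h : DifferentiableAt ℝ f x) :
    HasPartials f x (fun k => fderiv ℝ f x (Pi.single k 1)) :=
  ⟨_, h.hasFDerivAt, fun _ => rfl⟩

theorem fderiv_apply (h : HasPartials f x d) (v : Fin n → ℝ) :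
    fderiv ℝ f x v = ∑ k, v k • d k := by
  obtain ⟨L, hL, hLd⟩ := h
  conv_lhs => rw [hL.fderiv, ← Finset.univ_sum_single v]
  rw [map_sum]
  refine Finset.sum_congr rfl fun k _ => ?_
  rw [← hLd, ← map_smul, ← Pi.single_smul', smul_eq_mul, mul_one]

theorem add (hf : HasPartials f x d) (hg : HasPartials g x e) :
    HasPartials (fun y => f y + g y) x (fun k => d k + e k) :=
  let ⟨L, hL, hLd⟩ := hf; let ⟨M, hM, hMe⟩ := hg
  ⟨L + M, hL.add hM, fun k => by simp [hLd, hMe]⟩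

theorem sub (hf : HasPartials f x d) (hg : HasPartials g x e) :
    HasPartials (fun y => f y - g y) x (fun k => d k - e k) :=
  let ⟨L, hL, hLd⟩ := hf; let ⟨M, hM, hMe⟩ := hg
  ⟨L - M, hL.sub hM, fun k => by simp [hLd, hMe]⟩

theorem id : HasPartials (fun y : Fin n → ℝ => y) x (fun k => Pi.single k 1) :=
  ⟨ContinuousLinearMap.id ℝ _, hasFDerivAt_id x, fun _ => rfl⟩

theorem apply {κ : Type*} [Fintype κ] {F : (Fin n → ℝ) → κ → W} {dF : Fin n → κ → W}
    (h : HasPartials F x dF) (i : κ) : HasPartials (fun y => F y i) x (fun k => dF k i) :=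
  let ⟨L, hL, hLd⟩ := h
  ⟨(ContinuousLinearMap.proj i).comp L, hasFDerivAt_pi'.1 hL i, fun k => by simp [hLd]⟩

theorem pi {κ : Type*} [Fintype κ] {F : (Fin n → ℝ) → κ → W} {dF : Fin n → κ → W}
    (h : ∀ i, HasPartials (fun y => F y i) x (fun k => dF k i)) : HasPartials F x dF := by
  choose L hL hLd using h
  exact ⟨ContinuousLinearMap.pi L, hasFDerivAt_pi.2 hL, fun k => funext fun i => hLd i k⟩

theorem linear [FiniteDimensional ℝ W] {φ : W → W'} (hφ : IsLinearMap ℝ φ)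
    (h : HasPartials f x d) : HasPartials (fun y => φ (f y)) x (fun k => φ (d k)) :=
  let ⟨L, hL, hLd⟩ := h
  let Φ := LinearMap.toContinuousLinearMap (IsLinearMap.mk' φ hφ)
  ⟨Φ.comp L, Φ.hasFDerivAt.comp x hL, fun k => by simp [Φ, hLd]⟩

theorem bilinear [FiniteDimensional ℝ W] [FiniteDimensional ℝ W'] {B : W → W' → W''}
    (hB : IsBilinearMap ℝ B) {a : (Fin n → ℝ) → W} {b : (Fin n → ℝ) → W'}
    {da : Fin n → W} {db : Fin n → W'}
    (ha : HasPartials a x da) (hb : HasPartials b x db) :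
    HasPartials (fun y => B (a y) (b y)) x (fun k => B (da k) (b x) + B (a x) (db k)) :=
  let ⟨L, hL, hLd⟩ := ha; let ⟨M, hM, hMd⟩ := hb
  ⟨_, hB.toContinuousBilinearMap.hasFDerivAt_of_bilinear hL hM,
    fun k => by simp [hLd, hMd, add_comm]⟩

theorem congr_partials (h : HasPartials f x d) (hd : d = d') : HasPartials f x d' := hd ▸ h

end HasPartials

end Partials

theorem isBilinearMap_dotc : IsBilinearMap ℝ dotc where
  add_left _ _ _ := by simp [dotc, add_mul, Finset.sum_add_distrib]
  smul_left _ _ _ := by simp [dotc, Finset.mul_sum, mul_assoc]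
  add_right _ _ _ := by simp [dotc, mul_add, Finset.sum_add_distrib]
  smul_right _ _ _ := by simp [dotc, Finset.mul_sum, mul_left_comm]

theorem isBilinearMap_mapp : IsBilinearMap ℝ mapp where
  add_left _ _ _ := by ext; simp [mapp, add_mul, Finset.sum_add_distrib]
  smul_left _ _ _ := by ext; simp [mapp, Finset.mul_sum, mul_assoc]
  add_right _ _ _ := by ext; simp [mapp, mul_add, Finset.sum_add_distrib]
  smul_right _ _ _ := by ext; simp [mapp, Finset.mul_sum, mul_left_comm]

theorem isBilinearMap_cross : IsBilinearMap ℝ (fun a b : V3 => crossProduct a b) where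
  add_left _ _ _ := by simp
  smul_left c a b := by rw [LinearMap.map_smul_of_tower, LinearMap.smul_apply]
  add_right _ _ _ := by simp
  smul_right _ _ _ := LinearMap.map_smul_of_tower ..

theorem isBilinearMap_mul : IsBilinearMap ℝ ((· * ·) : ℂ → ℂ → ℂ) where
  add_left _ _ _ := add_mul ..
  smul_left _ _ _ := smul_mul_assoc ..
  add_right _ _ _ := mul_add ..
  smul_right _ _ _ := mul_smul_comm ..

theorem isLinearMap_cjv : IsLinearMap ℝ cjv where
  map_add _ _ := by ext; simp [cjv]
  map_smul _ _ := by ext; simp [cjv]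

theorem isLinearMap_toC : IsLinearMap ℝ toC where
  map_add _ _ := by ext; simp [toC]
  map_smul _ _ := by ext; simp [toC]

theorem isLinearMap_ofReal : IsLinearMap ℝ ((↑) : ℝ → ℂ) where
  map_add := ofReal_add
  map_smul _ _ := by simp

theorem isLinearMap_ofReal_two_mul_re :
    IsLinearMap ℝ (fun z : ℂ => ((2 * z.re : ℝ) : ℂ)) where
  map_add _ _ := by simp; ring
  map_smul _ _ := by simp; ring

namespace HasPartials

variable {F : (Fin 3 → ℝ) → V3} {x : Fin 3 → ℝ} {dF : Fin 3 → V3}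

theorem pdv_eq (h : HasPartials F x dF) (k : Fin 3) : pdv F k x = dF k :=
  let ⟨_, hL, hLd⟩ := h; by rw [pdv, hL.fderiv, hLd]

theorem divg_eq (h : HasPartials F x dF) : divg F x = ∑ i, dF i i := by
  simp only [divg, h.pdv_eq]

theorem curl3_eq (h : HasPartials F x dF) :
    curl3 F x = ![dF 1 2 - dF 2 1, dF 2 0 - dF 0 2, dF 0 1 - dF 1 0] := by
  ext i; fin_cases i <;> simp [curl3, h.pdv_eq]

theorem divg_add {G : (Fin 3 → ℝ) → V3} {dG : Fin 3 → V3}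
    (hF : HasPartials F x dF) (hG : HasPartials G x dG) :
    divg (fun y => F y + G y) x = divg F x + divg G x := by
  rw [(hF.add hG).divg_eq, hF.divg_eq, hG.divg_eq, ← Finset.sum_add_distrib]
  rfl

end HasPartials

theorem dotc_mapp_cjv (M : Fin 3 → Fin 3 → ℝ) (v w : V3) :
    dotc (mapp M v) (cjv w) = qf M v w :=
  rfl

theorem re_maxwell_pairing_eq_re_curl_pairing {M N : Fin 3 → Fin 3 → ℝ} (hM : IsSymm3 M)
    (hN : IsSymm3 N) (ω b : ℝ) (c c' e h : V3) (x : Fin 3 → ℝ) :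
    (dotc (fun i => c i - I * ω * mapp N h i)
          (fun i => crossProduct (mapp M (cjv e)) (toC x) i + (b : ℂ) * cjv h i)
        + dotc (fun i => c' i + I * ω * mapp M e i)
          (fun i => crossProduct (mapp N (cjv h)) (toC x) i - (b : ℂ) * cjv e i)).re
      = (dotc c (crossProduct (mapp M (cjv e)) (toC x))
          + dotc c' (crossProduct (mapp N (cjv h)) (toC x))
          + (b : ℂ) * (dotc c (cjv h) - dotc c' (cjv e))).re := by
  simp only [dotc, mapp, cjv, toC, cross_apply, Fin.sum_univ_three,
    Matrix.cons_val_zero, Matrix.cons_val_one, Matrix.cons_val_two, Matrix.head_cons,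
    Matrix.tail_cons, Fin.isValue]
  rw [hM 1 0, hM 2 0, hM 2 1, hN 1 0, hN 2 0, hN 2 1]
  simp only [Complex.add_re, Complex.sub_re, Complex.mul_re, Complex.mul_im, Complex.add_im,
    Complex.sub_im, Complex.ofReal_re, Complex.ofReal_im, Complex.I_re, Complex.I_im,
    Complex.conj_re, Complex.conj_im]
  ring

def morawetzFlux (E : (Fin 3 → ℝ) → V3) (ε : (Fin 3 → ℝ) → Fin 3 → Fin 3 → ℝ) :
    (Fin 3 → ℝ) → V3 := fun y i =>
  ((2 * (dotc (E y) (toC y) * mapp (ε y) (cjv (E y)) i).re : ℝ) : ℂ)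
    - qf (ε y) (E y) (E y) * (y i : ℂ)

def poyntingFlux (β : (Fin 3 → ℝ) → ℝ) (E H : (Fin 3 → ℝ) → V3) : (Fin 3 → ℝ) → V3 :=
  fun y i => ((2 * ((β y : ℂ) * crossProduct (E y) (cjv (H y)) i).re : ℝ) : ℂ)

section Fields

variable {E H : (Fin 3 → ℝ) → V3} {ε : (Fin 3 → ℝ) → Fin 3 → Fin 3 → ℝ} {β : (Fin 3 → ℝ) → ℝ}
  {x : Fin 3 → ℝ} {dE dH : Fin 3 → V3} {dε : Fin 3 → Fin 3 → Fin 3 → ℝ} {dβ : Fin 3 → ℝ}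

theorem hasPartials_morawetzFlux (hE : HasPartials E x dE) (hε : HasPartials ε x dε) :
    HasPartials (morawetzFlux E ε) x fun k i =>
      ((2 * ((dotc (dE k) (toC x) + dotc (E x) (toC (Pi.single k 1)))
            * mapp (ε x) (cjv (E x)) i
          + dotc (E x) (toC x) * (mapp (dε k) (cjv (E x)) i + mapp (ε x) (cjv (dE k)) i)).re
        : ℝ) : ℂ)
      - ((qf (dε k) (E x) (E x) + qf (ε x) (dE k) (E x) + qf (ε x) (E x) (dE k)) * (x i : ℂ)
        + qf (ε x) (E x) (E x) * ((Pi.single k 1 : Fin 3 → ℝ) i : ℂ)) := by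
  have hx : HasPartials (fun y : Fin 3 → ℝ => y) x _ := .id
  have hεE := hε.bilinear isBilinearMap_mapp (hE.linear isLinearMap_cjv)
  have hq := (hε.bilinear isBilinearMap_mapp hE).bilinear isBilinearMap_dotc
    (hE.linear isLinearMap_cjv)
  refine HasPartials.pi fun i => ?_
  refine ((((hE.bilinear isBilinearMap_dotc (hx.linear isLinearMap_toC)).bilinear
    isBilinearMap_mul (hεE.apply i)).linear isLinearMap_ofReal_two_mul_re).sub
    (hq.bilinear isBilinearMap_mul ((hx.apply i).linear isLinearMap_ofReal))).congr_partials ?_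
  funext k
  simp only [isBilinearMap_dotc.add_left, dotc_mapp_cjv, Pi.add_apply]

theorem re_curl_dotc_cross_eq_divg_morawetzFlux (hE : HasPartials E x dE)
    (hε : HasPartials ε x dε) (hsym : IsSymm3 (ε x)) :
    ((2 * (dotc (curl3 E x) (crossProduct (mapp (ε x) (cjv (E x))) (toC x))).re : ℝ) : ℂ) =
      divg (morawetzFlux E ε) x
      - ((2 * (dotc (E x) (toC x) * divg (fun y => mapp (ε y) (cjv (E y))) x).re : ℝ) : ℂ)
      + qf (fun i j => ε x i j + fderiv ℝ ε x x i j) (E x) (E x) := by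
  rw [(hasPartials_morawetzFlux hE hε).divg_eq,
    (hε.bilinear isBilinearMap_mapp (hE.linear isLinearMap_cjv)).divg_eq, hE.curl3_eq,
    hε.fderiv_apply]
  -- with `2 Re z = z + conj z`, both sides become polynomials in the coordinates and their
  -- conjugates, and `ring` can compare them
  simp only [← Complex.add_conj, dotc, qf, mapp, cjv, toC, cross_apply, Fin.sum_univ_three,
    Finset.sum_apply, Pi.add_apply, Pi.smul_apply, smul_eq_mul, Pi.single_apply,
    Matrix.cons_val_zero, Matrix.cons_val_one, Matrix.cons_val_two, Matrix.head_cons,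
    Matrix.tail_cons, Fin.isValue, Fin.reduceEq, if_true, if_false]
  simp only [map_add, map_sub, map_mul, map_one, map_zero, Complex.conj_conj,
    Complex.conj_ofReal, Complex.ofReal_one, Complex.ofReal_zero, Complex.ofReal_add,
    Complex.ofReal_mul]
  rw [hsym 1 0, hsym 2 0, hsym 2 1]
  ring

theorem hasPartials_poyntingFlux (hβ : HasPartials β x dβ) (hE : HasPartials E x dE)
    (hH : HasPartials H x dH) :
    HasPartials (poyntingFlux β E H) x fun k i =>
      ((2 * ((dβ k : ℂ) * crossProduct (E x) (cjv (H x)) i + (β x : ℂ) *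
        (crossProduct (dE k) (cjv (H x)) + crossProduct (E x) (cjv (dH k))) i).re : ℝ) : ℂ) := by
  refine HasPartials.pi fun i => ?_
  have hβEH := (hβ.linear isLinearMap_ofReal).bilinear isBilinearMap_mul
    ((hE.bilinear isBilinearMap_cross (hH.linear isLinearMap_cjv)).apply i)
  exact (hβEH.linear isLinearMap_ofReal_two_mul_re :)

theorem re_curl_pairing_eq_divg_poyntingFlux (hβ : HasPartials β x dβ)
    (hE : HasPartials E x dE) (hH : HasPartials H x dH) :
    ((2 * ((β x : ℂ) * (dotc (curl3 E x) (cjv (H x)) - dotc (curl3 H x) (cjv (E x)))).re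
      : ℝ) : ℂ)
      = divg (poyntingFlux β E H) x
        - ((2 * (dotc (toC dβ) (crossProduct (E x) (cjv (H x)))).re : ℝ) : ℂ) := by
  rw [(hasPartials_poyntingFlux hβ hE hH).divg_eq, hE.curl3_eq, hH.curl3_eq]
  simp only [← Complex.add_conj, dotc, cjv, toC, cross_apply, Fin.sum_univ_three, Pi.add_apply,
    Matrix.cons_val_zero, Matrix.cons_val_one, Matrix.cons_val_two, Matrix.head_cons,
    Matrix.tail_cons, Fin.isValue]
  simp only [map_add, map_sub, map_mul, Complex.conj_conj, Complex.conj_ofReal]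
  ring

end Fields

theorem stmt3_general (D : Set (Fin 3 → ℝ)) (hD : IsOpen D) (ω : ℝ)
    (E H : (Fin 3 → ℝ) → V3) (hE : ContDiffOn ℝ 2 E D) (hH : ContDiffOn ℝ 2 H D)
    (ε μ : (Fin 3 → ℝ) → Fin 3 → Fin 3 → ℝ)
    (hε : ContDiffOn ℝ 1 ε D) (hμ : ContDiffOn ℝ 1 μ D)
    (hεsym : ∀ x ∈ D, IsSymm3 (ε x)) (hμsym : ∀ x ∈ D, IsSymm3 (μ x))
    (β : (Fin 3 → ℝ) → ℝ) (hβ : ContDiffOn ℝ 1 β D) :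
    ∀ x ∈ D,
      ((2 * (dotc (fun i => curl3 E x i - Complex.I * ω * mapp (μ x) (H x) i)
                  (fun i => crossProduct (mapp (ε x) (cjv (E x))) (toC x) i
                              + (β x : ℂ) * cjv (H x) i)
              + dotc (fun i => curl3 H x i + Complex.I * ω * mapp (ε x) (E x) i)
                  (fun i => crossProduct (mapp (μ x) (cjv (H x))) (toC x) i
                              - (β x : ℂ) * cjv (E x) i)).re : ℝ) : ℂ)
      = divg (fun y i =>
            ((2 * (dotc (E y) (toC y) * mapp (ε y) (cjv (E y)) i
                    + dotc (H y) (toC y) * mapp (μ y) (cjv (H y)) i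
                    + (β y : ℂ) * crossProduct (E y) (cjv (H y)) i).re : ℝ) : ℂ)
              - qf (ε y) (E y) (E y) * (y i : ℂ)
              - qf (μ y) (H y) (H y) * (y i : ℂ)) x
        - ((2 * (dotc (E x) (toC x) * divg (fun y => mapp (ε y) (cjv (E y))) x
                  + dotc (H x) (toC x) * divg (fun y => mapp (μ y) (cjv (H y))) x
                  + dotc (toC (gradR β x)) (crossProduct (E x) (cjv (H x)))).re : ℝ) : ℂ)
        + qf (fun i j => ε x i j + fderiv ℝ ε x x i j) (E x) (E x)
        + qf (fun i j => μ x i j + fderiv ℝ μ x x i j) (H x) (H x) := by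
  intro x hx
  have hxD := hD.mem_nhds hx
  have hEp := HasPartials.of_differentiableAt ((hE.contDiffAt hxD).differentiableAt two_ne_zero)
  have hHp := HasPartials.of_differentiableAt ((hH.contDiffAt hxD).differentiableAt two_ne_zero)
  have hεp := HasPartials.of_differentiableAt ((hε.contDiffAt hxD).differentiableAt one_ne_zero)
  have hμp := HasPartials.of_differentiableAt ((hμ.contDiffAt hxD).differentiableAt one_ne_zero)
  have hβp : HasPartials β x (gradR β x) :=
    HasPartials.of_differentiableAt ((hβ.contDiffAt hxD).differentiableAt one_ne_zero)
  have hflux_split : (fun y i =>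
      ((2 * (dotc (E y) (toC y) * mapp (ε y) (cjv (E y)) i
              + dotc (H y) (toC y) * mapp (μ y) (cjv (H y)) i
              + (β y : ℂ) * crossProduct (E y) (cjv (H y)) i).re : ℝ) : ℂ)
        - qf (ε y) (E y) (E y) * (y i : ℂ) - qf (μ y) (H y) (H y) * (y i : ℂ))
      = fun y => morawetzFlux E ε y + morawetzFlux H μ y + poyntingFlux β E H y := by
    funext y i
    simp only [morawetzFlux, poyntingFlux, Pi.add_apply, Complex.add_re]
    push_cast
    ring
  have hE_id := re_curl_dotc_cross_eq_divg_morawetzFlux hEp hεp (hεsym x hx)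
  have hH_id := re_curl_dotc_cross_eq_divg_morawetzFlux hHp hμp (hμsym x hx)
  have hβ_id := re_curl_pairing_eq_divg_poyntingFlux hβp hEp hHp
  rw [re_maxwell_pairing_eq_re_curl_pairing (hεsym x hx) (hμsym x hx), hflux_split,
    ((hasPartials_morawetzFlux hEp hεp).add (hasPartials_morawetzFlux hHp hμp)).divg_add
      (hasPartials_poyntingFlux hβp hEp hHp),
    (hasPartials_morawetzFlux hEp hεp).divg_add (hasPartials_morawetzFlux hHp hμp)]
  push_cast [Complex.add_re] at hE_id hH_id hβ_id ⊢
  linear_combination hE_id + hH_id + hβ_id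

/-- the first Morawetz-type identity (Lemma 2.1 of the paper), pointwise in `D`. -/
theorem stmt3 (D : Set (Fin 3 → ℝ)) (hD : IsOpen D) (ω : ℝ) (hω : 0 < ω)
    (E H : (Fin 3 → ℝ) → V3) (hE : ContDiffOn ℝ 2 E D) (hH : ContDiffOn ℝ 2 H D)
    (ε μ : (Fin 3 → ℝ) → Fin 3 → Fin 3 → ℝ)
    (hε : ContDiffOn ℝ 1 ε D) (hμ : ContDiffOn ℝ 1 μ D)
    (hεsym : ∀ x ∈ D, IsSymm3 (ε x)) (hμsym : ∀ x ∈ D, IsSymm3 (μ x))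
    (β : (Fin 3 → ℝ) → ℝ) (hβ : ContDiffOn ℝ 1 β D) :
    ∀ x ∈ D,
      ((2 * (dotc (fun i => curl3 E x i - Complex.I * ω * mapp (μ x) (H x) i)
                  (fun i => crossProduct (mapp (ε x) (cjv (E x))) (toC x) i
                              + (β x : ℂ) * cjv (H x) i)
              + dotc (fun i => curl3 H x i + Complex.I * ω * mapp (ε x) (E x) i)
                  (fun i => crossProduct (mapp (μ x) (cjv (H x))) (toC x) i
                              - (β x : ℂ) * cjv (E x) i)).re : ℝ) : ℂ)
      = divg (fun y i =>
            ((2 * (dotc (E y) (toC y) * mapp (ε y) (cjv (E y)) i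
                    + dotc (H y) (toC y) * mapp (μ y) (cjv (H y)) i
                    + (β y : ℂ) * crossProduct (E y) (cjv (H y)) i).re : ℝ) : ℂ)
              - qf (ε y) (E y) (E y) * (y i : ℂ)
              - qf (μ y) (H y) (H y) * (y i : ℂ)) x
        - ((2 * (dotc (E x) (toC x) * divg (fun y => mapp (ε y) (cjv (E y))) x
                  + dotc (H x) (toC x) * divg (fun y => mapp (μ y) (cjv (H y))) x
                  + dotc (toC (gradR β x)) (crossProduct (E x) (cjv (H x)))).re : ℝ) : ℂ)
        + qf (fun i j => ε x i j + fderiv ℝ ε x x i j) (E x) (E x)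
        + qf (fun i j => μ x i j + fderiv ℝ μ x x i j) (H x) (H x) :=
  stmt3_general D hD ω E H hE hH ε μ hε hμ hεsym hμsym β hβ
end
end

section
/- For complex vectors E, H ∈ C^3, a unit vector x̂ ∈ R^3, and positive real constants ε₀, μ₀: −2√(ε₀μ₀) Re{x̂·(E×H̄)} = (1/(2μ₀))|μ₀ H×x̂ − √(ε₀μ₀) E|² + (1/(2ε₀))|ε₀ x̂×E − √(ε₀μ₀) H|² − (ε₀/2)(|E|² + |E×x̂|²) − (μ₀/2)(|H|² + |H×x̂|²). -/
/-!
Expand both squares by polarization, `|c a - d b|² = c²|a|² + d²|b|² - 2cd Re(a · b̄)`.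
The two cross terms are scalar triple products; by cyclic permutation, and since `x̂` is real
(so conjugation fixes it), each equals `Re x̂ · (E × H̄)`. Since `√(ε₀μ₀)² = ε₀μ₀` and
`|x̂ × E| = |E × x̂|`, the squared terms cancel against the subtracted ones.
-/

open scoped BigOperators
open Complex

noncomputable section

open Matrix

lemma dotc_eq_dotProduct (a b : V3) : dotc a b = a ⬝ᵥ b := rfl

lemma star_toC (x : Fin 3 → ℝ) : star (toC x) = toC x :=
  funext fun i => Complex.conj_ofReal (x i)

lemma star_cross {R : Type*} [CommRing R] [StarRing R] (a b : Fin 3 → R) : star (a ⨯₃ b) = star a ⨯₃ star b := by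
  ext i
  fin_cases i <;> simp [cross_apply]

lemma n2_cross_comm (a b : V3) : n2 (a ⨯₃ b) = n2 (b ⨯₃ a) := by
  simp only [n2, ← cross_anticomm b a, Pi.neg_apply, Complex.normSq_neg]

lemma n2_mul_sub_mul (c d : ℝ) (a b : V3) :
    n2 (fun i => (c : ℂ) * a i - (d : ℂ) * b i)
      = c ^ 2 * n2 a + d ^ 2 * n2 b - 2 * c * d * (dotc a (cjv b)).re := by
  simp only [n2, dotc, cjv, Complex.normSq_sub, Complex.normSq_mul, Complex.normSq_ofReal,
    Complex.re_sum, Finset.mul_sum, ← Finset.sum_sub_distrib, ← Finset.sum_add_distrib]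
  refine Finset.sum_congr rfl fun i _ => ?_
  rw [map_mul, Complex.conj_ofReal, mul_mul_mul_comm, ← Complex.ofReal_mul,
    Complex.re_ofReal_mul]
  ring

lemma dotc_cross_left (a b c : V3) : dotc (a ⨯₃ b) c = dotc a (b ⨯₃ c) := by
  rw [dotc_eq_dotProduct, dotProduct_comm, triple_product_permutation]
  rfl

lemma re_dotc_cross_toC_cjv (a b : V3) (x : Fin 3 → ℝ) :
    (dotc (a ⨯₃ toC x) (cjv b)).re = (dotc (toC x) (b ⨯₃ cjv a)).re := by
  have h : dotc (a ⨯₃ toC x) (cjv b) = star (dotc (toC x) (b ⨯₃ cjv a)) :=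
    calc dotc (a ⨯₃ toC x) (cjv b)
        = star b ⬝ᵥ a ⨯₃ toC x := dotProduct_comm _ _
      _ = toC x ⬝ᵥ star b ⨯₃ a := by rw [triple_product_permutation, triple_product_permutation]
      _ = star (b ⨯₃ star a) ⬝ᵥ star (toC x) := by
        rw [star_cross, star_star, star_toC, dotProduct_comm]
      _ = star (dotc (toC x) (b ⨯₃ cjv a)) := star_dotProduct_star _ _
  rw [h, Complex.star_def, Complex.conj_re]

theorem stmt5_general (ε₀ μ₀ : ℝ) (hε : 0 < ε₀) (hμ : 0 < μ₀)
    (E H : V3) (xh : Fin 3 → ℝ) :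
    -2 * Real.sqrt (ε₀ * μ₀) * (dotc (toC xh) (crossProduct E (cjv H))).re
    = (1 / (2 * μ₀)) *
        n2 (fun i => (μ₀ : ℂ) * crossProduct H (toC xh) i - (Real.sqrt (ε₀ * μ₀) : ℂ) * E i)
      + (1 / (2 * ε₀)) *
        n2 (fun i => (ε₀ : ℂ) * crossProduct (toC xh) E i - (Real.sqrt (ε₀ * μ₀) : ℂ) * H i)
      - (ε₀ / 2) * (n2 E + n2 (crossProduct E (toC xh)))
      - (μ₀ / 2) * (n2 H + n2 (crossProduct H (toC xh))) := by
  have hs : Real.sqrt (ε₀ * μ₀) ^ 2 = ε₀ * μ₀ := Real.sq_sqrt (by positivity)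
  rw [n2_mul_sub_mul, n2_mul_sub_mul, n2_cross_comm (toC xh) E, re_dotc_cross_toC_cjv,
    dotc_cross_left, hs]
  field_simp
  ring

/-- the algebraic identity behind the second Morawetz identity. -/
theorem stmt5 (ε₀ μ₀ : ℝ) (hε : 0 < ε₀) (hμ : 0 < μ₀)
    (E H : V3) (xh : Fin 3 → ℝ) (hx : ∑ i, xh i ^ 2 = 1) :
    -2 * Real.sqrt (ε₀ * μ₀) * (dotc (toC xh) (crossProduct E (cjv H))).re
    = (1 / (2 * μ₀)) *
        n2 (fun i => (μ₀ : ℂ) * crossProduct H (toC xh) i - (Real.sqrt (ε₀ * μ₀) : ℂ) * E i)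
      + (1 / (2 * ε₀)) *
        n2 (fun i => (ε₀ : ℂ) * crossProduct (toC xh) E i - (Real.sqrt (ε₀ * μ₀) : ℂ) * H i)
      - (ε₀ / 2) * (n2 E + n2 (crossProduct E (toC xh)))
      - (μ₀ / 2) * (n2 H + n2 (crossProduct H (toC xh))) :=
  stmt5_general ε₀ μ₀ hε hμ E H xh
end
end

section
/- Let v ∈ C^3, α ∈ SPD(3), x ∈ R^3, and n̂ ∈ R^3 a unit vector with x·n̂ > 0. With v_N := (v·n̂)n̂, v_T := v − v_N, x_T := x − (x·n̂)n̂, and |α| the operator norm, one has −2Re{(v_T·x_T)(α v̄·n̂)} ≤ (2|x_T| + |x_T|²/(x·n̂))|α||v_T|² + (x·n̂)(α v_N·v̄_N). -/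
open scoped BigOperators
open Complex

noncomputable section

/-- Euclidean norm of a real 3-vector. -/
def rnorm (y : Fin 3 → ℝ) : ℝ := Real.sqrt (∑ i, y i ^ 2)

/-! Write `v = v_T + c n̂` with `c = v · n̂`. Then `α v̄ · n̂ = α v̄_T · n̂ + c̄ q` and
`α v_N · v̄_N = |c|² q`, where `q = α n̂ · n̂ ∈ (0, |α|]`. Cauchy–Schwarz bounds the first
part of `-2 Re{(v_T · x_T)(α v̄ · n̂)}` by `2 |x_T| |α| |v_T|²`, and the weighted Young
inequality `2ab ≤ a²/(x · n̂) + (x · n̂) b²` with `a = |v_T · x_T|`, `b = |c|` bounds the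
second. -/

open ComplexConjugate

lemma norm_dotc_le (a b : V3) : ‖dotc a b‖ ≤ √(n2 a) * √(n2 b) := by
  calc ‖dotc a b‖ ≤ ∑ i, ‖a i‖ * ‖b i‖ := by
        simpa only [dotc, norm_mul] using norm_sum_le Finset.univ fun i => a i * b i
    _ ≤ √(∑ i, ‖a i‖ ^ 2) * √(∑ i, ‖b i‖ ^ 2) := Real.sum_mul_le_sqrt_mul_sqrt _ _ _
    _ = √(n2 a) * √(n2 b) := by simp only [n2, Complex.sq_norm]

lemma n2_cjv (w : V3) : n2 (cjv w) = n2 w := by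
  simp only [n2, cjv, Complex.normSq_conj]

lemma n2_toC (y : Fin 3 → ℝ) : n2 (toC y) = ∑ i, y i ^ 2 := by
  simp only [n2, toC, Complex.normSq_ofReal, sq]

lemma toC_ne_zero {y : Fin 3 → ℝ} (hy : ∑ i, y i ^ 2 = 1) : toC y ≠ 0 := by
  intro h
  have : n2 (toC y) = 0 := by simp [h, n2]
  rw [n2_toC, hy] at this
  exact one_ne_zero this

lemma sqrt_n2_mapp_le {α : Fin 3 → Fin 3 → ℝ} {C : ℝ} (hC : 0 ≤ C)
    (hb : ∀ u : V3, n2 (mapp α u) ≤ C ^ 2 * n2 u) (u : V3) :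
    √(n2 (mapp α u)) ≤ C * √(n2 u) := by
  calc √(n2 (mapp α u)) ≤ √(C ^ 2 * n2 u) := Real.sqrt_le_sqrt (hb u)
    _ = C * √(n2 u) := by rw [Real.sqrt_mul (sq_nonneg C), Real.sqrt_sq hC]

lemma norm_dotc_mapp_le {α : Fin 3 → Fin 3 → ℝ} {C : ℝ} (hC : 0 ≤ C)
    (hb : ∀ u : V3, n2 (mapp α u) ≤ C ^ 2 * n2 u) (u : V3) {y : Fin 3 → ℝ}
    (hy : ∑ i, y i ^ 2 = 1) : ‖dotc (mapp α u) (toC y)‖ ≤ C * √(n2 u) := by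
  calc ‖dotc (mapp α u) (toC y)‖ ≤ √(n2 (mapp α u)) * √(n2 (toC y)) := norm_dotc_le _ _
    _ = √(n2 (mapp α u)) := by rw [n2_toC, hy, Real.sqrt_one, mul_one]
    _ ≤ C * √(n2 u) := sqrt_n2_mapp_le hC hb u

lemma qf_toC_eq_ofReal (α : Fin 3 → Fin 3 → ℝ) (y : Fin 3 → ℝ) :
    qf α (toC y) (toC y) = ((∑ i, (∑ j, α i j * y j) * y i : ℝ) : ℂ) := by
  simp [qf, mapp, toC]

lemma dotc_mapp_toC_eq_qf (α : Fin 3 → Fin 3 → ℝ) (y : Fin 3 → ℝ) :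
    dotc (mapp α (toC y)) (toC y) = qf α (toC y) (toC y) := by
  simp only [dotc, qf, toC, Complex.conj_ofReal]

lemma dotc_mapp_cjv_add_mul (α : Fin 3 → Fin 3 → ℝ) (w : V3) (c : ℂ) (y : Fin 3 → ℝ) :
    dotc (mapp α (cjv fun i => w i + c * toC y i)) (toC y)
      = dotc (mapp α (cjv w)) (toC y) + conj c * qf α (toC y) (toC y) := by
  rw [← dotc_mapp_toC_eq_qf]
  simp only [dotc, mapp, cjv, toC, map_add, map_mul, Complex.conj_ofReal, Fin.sum_univ_three]
  ring

lemma qf_mul_self (α : Fin 3 → Fin 3 → ℝ) (c : ℂ) (w : V3) :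
    qf α (fun i => c * w i) (fun i => c * w i) = Complex.normSq c * qf α w w := by
  rw [Complex.normSq_eq_conj_mul_self]
  simp only [qf, mapp, map_mul, Fin.sum_univ_three]
  ring

lemma two_mul_le_sq_div_add_mul_sq {a b s : ℝ} (hs : 0 < s) :
    2 * (a * b) ≤ a ^ 2 / s + s * b ^ 2 := by
  have : a ^ 2 / s + s * b ^ 2 - 2 * (a * b) = (a - s * b) ^ 2 / s := by
    field_simp; ring
  nlinarith [div_nonneg (sq_nonneg (a - s * b)) hs.le]

lemma neg_re_mul_le (z w : ℂ) : -(z * w).re ≤ ‖z‖ * ‖w‖ := by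
  rw [← norm_mul]
  exact (neg_le_abs _).trans (Complex.abs_re_le_norm _)

lemma neg_two_re_mul_add_conj_mul_le {A B c : ℂ} {q s t C m : ℝ}
    (hA : ‖A‖ ≤ t * √m) (hB : ‖B‖ ≤ C * √m) (hq : 0 ≤ q) (hqC : q ≤ C) (hs : 0 < s)
    (hm : 0 ≤ m) (ht : 0 ≤ t) :
    -2 * (A * (B + conj c * q)).re
      ≤ (2 * t + t ^ 2 / s) * C * m + s * (Complex.normSq c * q) := by
  have hre : (A * (B + conj c * q)).re = (A * B).re + q * (A * conj c).re := by
    simp only [mul_add, ← mul_assoc, Complex.add_re, Complex.re_mul_ofReal]; ring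
  have hAB : -(A * B).re ≤ t * C * m := by
    calc -(A * B).re ≤ ‖A‖ * ‖B‖ := neg_re_mul_le A B
      _ ≤ (t * √m) * (C * √m) := mul_le_mul hA hB (norm_nonneg _) (by positivity)
      _ = t * C * (√m * √m) := by ring
      _ = t * C * m := by rw [Real.mul_self_sqrt hm]
  have hAc : -2 * (A * conj c).re ≤ t ^ 2 * m / s + s * Complex.normSq c := by
    calc -2 * (A * conj c).re ≤ 2 * (‖A‖ * ‖c‖) := by
          have := neg_re_mul_le A (conj c); rw [Complex.norm_conj] at this; linarith
      _ ≤ ‖A‖ ^ 2 / s + s * ‖c‖ ^ 2 := two_mul_le_sq_div_add_mul_sq hs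
      _ ≤ t ^ 2 * m / s + s * Complex.normSq c := by
          rw [Complex.sq_norm c]
          gcongr
          calc ‖A‖ ^ 2 ≤ (t * √m) ^ 2 := pow_le_pow_left₀ (norm_nonneg _) hA 2
            _ = t ^ 2 * m := by rw [mul_pow, Real.sq_sqrt hm]
  have hqt : q * (t ^ 2 * m / s) ≤ C * (t ^ 2 * m / s) :=
    mul_le_mul_of_nonneg_right hqC (by positivity)
  rw [hre]
  calc -2 * ((A * B).re + q * (A * conj c).re)
        = 2 * -(A * B).re + q * (-2 * (A * conj c).re) := by ring
    _ ≤ 2 * (t * C * m) + q * (t ^ 2 * m / s + s * Complex.normSq c) := by gcongr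
    _ ≤ 2 * (t * C * m) + (C * (t ^ 2 * m / s) + q * (s * Complex.normSq c)) := by
        rw [mul_add]; linarith
    _ = (2 * t + t ^ 2 / s) * C * m + s * (Complex.normSq c * q) := by ring

/-- The operator norm `|α|` is represented by any constant `Cα ≥ 0` bounding it. -/
theorem stmt14_general (α : Fin 3 → Fin 3 → ℝ) (hpos : IsPos3 α)
    (Cα : ℝ) (hCα : 0 ≤ Cα) (hb : ∀ u : V3, n2 (mapp α u) ≤ Cα ^ 2 * n2 u)
    (v : V3) (x n : Fin 3 → ℝ) (hn : ∑ i, n i ^ 2 = 1) (hxn : 0 < ∑ i, x i * n i) :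
    let vN : V3 := fun i => dotc v (toC n) * (n i : ℂ)
    let vT : V3 := fun i => v i - vN i
    let xT : Fin 3 → ℝ := fun i => x i - (∑ j, x j * n j) * n i ;
    -2 * (dotc vT (toC xT) * dotc (mapp α (cjv v)) (toC n)).re
      ≤ (2 * rnorm xT + rnorm xT ^ 2 / (∑ i, x i * n i)) * Cα * n2 vT
        + (∑ i, x i * n i) * (qf α vN vN).re := by
  intro vN vT xT
  set c := dotc v (toC n)
  obtain ⟨q, hq⟩ : ∃ q : ℝ, qf α (toC n) (toC n) = q := ⟨_, qf_toC_eq_ofReal α n⟩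
  have hq0 : 0 < q := by simpa [hq] using hpos _ (toC_ne_zero hn)
  have hqC : q ≤ Cα := by
    calc q = ‖qf α (toC n) (toC n)‖ := by
          rw [hq, Complex.norm_real, Real.norm_of_nonneg hq0.le]
      _ = ‖dotc (mapp α (toC n)) (toC n)‖ := by rw [dotc_mapp_toC_eq_qf]
      _ ≤ Cα * √(n2 (toC n)) := norm_dotc_mapp_le hCα hb _ hn
      _ = Cα := by rw [n2_toC, hn, Real.sqrt_one, mul_one]
  have hv : v = fun i => vT i + c * toC n i := by
    funext i; simp only [vT, vN, toC]; ring
  have hsplit :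
      dotc (mapp α (cjv v)) (toC n) = dotc (mapp α (cjv vT)) (toC n) + conj c * q := by
    rw [hv, dotc_mapp_cjv_add_mul, hq]
  have hvN : (qf α vN vN).re = Complex.normSq c * q := by
    change (qf α (fun i => c * toC n i) fun i => c * toC n i).re = _
    rw [qf_mul_self, hq, ← Complex.ofReal_mul, Complex.ofReal_re]
  have hA : ‖dotc vT (toC xT)‖ ≤ rnorm xT * √(n2 vT) := by
    rw [mul_comm, rnorm, ← n2_toC]; exact norm_dotc_le _ _
  have hB : ‖dotc (mapp α (cjv vT)) (toC n)‖ ≤ Cα * √(n2 vT) := by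
    rw [← n2_cjv]; exact norm_dotc_mapp_le hCα hb _ hn
  rw [hsplit, hvN]
  exact neg_two_re_mul_add_conj_mul_le hA hB hq0.le hqC hxn
    (Finset.sum_nonneg fun i _ => Complex.normSq_nonneg _) (Real.sqrt_nonneg _)

/-- pointwise boundary estimate used for the impedance problem.  The operator
norm `|α|` is represented by any constant `Cα ≥ 0` bounding the operator norm of `α`. -/
theorem stmt14 (α : Fin 3 → Fin 3 → ℝ) (hsym : IsSymm3 α) (hpos : IsPos3 α)
    (Cα : ℝ) (hCα : 0 ≤ Cα) (hb : ∀ u : V3, n2 (mapp α u) ≤ Cα ^ 2 * n2 u)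
    (v : V3) (x n : Fin 3 → ℝ) (hn : ∑ i, n i ^ 2 = 1) (hxn : 0 < ∑ i, x i * n i) :
    let vN : V3 := fun i => dotc v (toC n) * (n i : ℂ)
    let vT : V3 := fun i => v i - vN i
    let xT : Fin 3 → ℝ := fun i => x i - (∑ j, x j * n j) * n i ;
    -2 * (dotc vT (toC xT) * dotc (mapp α (cjv v)) (toC n)).re
      ≤ (2 * rnorm xT + rnorm xT ^ 2 / (∑ i, x i * n i)) * Cα * n2 vT
        + (∑ i, x i * n i) * (qf α vN vN).re :=
  stmt14_general α hpos Cα hCα hb v x n hn hxn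
end
end
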